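/- arXiv:0809.3359 — 5 statements merged into one kernel-verified Lean document; each statement's English description precedes it below -/
import Mathlib

section
/- Let D be an invertible Hermitian n×n matrix and x a nonzero vector with x* D⁻¹ x = 1. Define G = I − (x* D⁻² x)⁻¹ D⁻¹ x x* D⁻¹. Then G is the orthogonal projector onto the range of D − x x*, and the Moore–Penrose inverse of D − x x* equals G D⁻¹ G. -/
/-! With `y = D⁻¹ x` the hypothesis reads `x* y = 1`, so `D − x x*` annihilates `y` from both
sides and `G = I − y y* / (y* y)` is the orthogonal projector onto `y^⊥`, which fixes `D − x x*`
from both sides. Moreover `(D − x x*) D⁻¹ = I − x y*` and `D⁻¹ (D − x x*) = I − y x*`, whose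
rank-one parts are killed by `G`; hence both products of `D − x x*` with `G D⁻¹ G` equal `G`,
and the Penrose conditions reduce to `G` being a Hermitian idempotent. -/

open Matrix

/-- `B` is the Moore–Penrose inverse of `A` (the four Penrose conditions). -/
def IsMoorePenroseInv {n : ℕ} (A B : Matrix (Fin n) (Fin n) ℂ) : Prop :=
  A * B * A = A ∧ B * A * B = B ∧ (A * B)ᴴ = A * B ∧ (B * A)ᴴ = B * A

theorem isMoorePenroseInv_of_mul_eq {n : ℕ} {A B G : Matrix (Fin n) (Fin n) ℂ}
    (hAB : A * B = G) (hBA : B * A = G) (hG : Gᴴ = G) (hGA : G * A = A) (hGB : G * B = B) :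
    IsMoorePenroseInv A B := by
  refine ⟨?_, ?_, ?_, ?_⟩ <;> simp only [hAB, hBA, hG, hGA, hGB]

namespace Matrix

theorem range_mulVecLin_mul_le {l m n R : Type*} [Fintype m] [Fintype n] [CommSemiring R]
    (A : Matrix l m R) (B : Matrix m n R) :
    LinearMap.range (A * B).mulVecLin ≤ LinearMap.range A.mulVecLin := by
  rw [mulVecLin_mul]
  exact LinearMap.range_comp_le_range _ _

variable {m 𝕜 : Type*} [Fintype m] [DecidableEq m] [RCLike 𝕜]

/-- The orthogonal projector onto the hyperplane `y^⊥`. -/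
noncomputable def orthProjCompl (y : m → 𝕜) : Matrix m m 𝕜 :=
  1 - (star y ⬝ᵥ y)⁻¹ • vecMulVec y (star y)

omit [DecidableEq m] in
theorem dotProduct_star_self_ne_zero {y : m → 𝕜} (hy : y ≠ 0) : star y ⬝ᵥ y ≠ 0 := by
  open scoped ComplexOrder in exact dotProduct_star_self_eq_zero.not.mpr hy

theorem conjTranspose_orthProjCompl (y : m → 𝕜) : (orthProjCompl y)ᴴ = orthProjCompl y := by
  rw [orthProjCompl, conjTranspose_sub, conjTranspose_one, conjTranspose_smul,
    conjTranspose_vecMulVec, star_star, star_inv₀, ← star_dotProduct]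

theorem vecMulVec_star_mul_orthProjCompl {y : m → 𝕜} (hy : y ≠ 0) (u : m → 𝕜) :
    vecMulVec u (star y) * orthProjCompl y = 0 := by
  rw [orthProjCompl, mul_sub, mul_one, mul_smul_comm, vecMulVec_mul_vecMulVec, vecMulVec_smul,
    smul_smul, inv_mul_cancel₀ (dotProduct_star_self_ne_zero hy), one_smul, sub_self]

theorem orthProjCompl_mul_vecMulVec {y : m → 𝕜} (hy : y ≠ 0) (v : m → 𝕜) :
    orthProjCompl y * vecMulVec y v = 0 := by
  rw [orthProjCompl, sub_mul, one_mul, smul_mul_assoc, vecMulVec_mul_vecMulVec, vecMulVec_smul,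
    smul_smul, inv_mul_cancel₀ (dotProduct_star_self_ne_zero hy), one_smul, sub_self]

theorem orthProjCompl_mul_self {y : m → 𝕜} (hy : y ≠ 0) :
    orthProjCompl y * orthProjCompl y = orthProjCompl y := by
  nth_rw 1 [orthProjCompl]
  rw [sub_mul, one_mul, smul_mul_assoc, vecMulVec_star_mul_orthProjCompl hy, smul_zero, sub_zero]

theorem mul_orthProjCompl_of_mulVec_eq_zero {A : Matrix m m 𝕜} {y : m → 𝕜}
    (hAy : A *ᵥ y = 0) : A * orthProjCompl y = A := by
  rw [orthProjCompl, mul_sub, mul_one, mul_smul_comm, mul_vecMulVec, hAy, zero_vecMulVec,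
    smul_zero, sub_zero]

theorem orthProjCompl_mul_of_vecMul_eq_zero {A : Matrix m m 𝕜} {y : m → 𝕜}
    (hyA : star y ᵥ* A = 0) : orthProjCompl y * A = A := by
  rw [orthProjCompl, sub_mul, one_mul, smul_mul_assoc, vecMulVec_mul, hyA, vecMulVec_zero,
    smul_zero, sub_zero]

theorem sub_vecMulVec_mulVec_inv_mulVec {D : Matrix m m 𝕜} (hDu : IsUnit D) {x : m → 𝕜}
    (hx : star x ⬝ᵥ D⁻¹ *ᵥ x = 1) : (D - vecMulVec x (star x)) *ᵥ (D⁻¹ *ᵥ x) = 0 := by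
  rw [sub_mulVec, mulVec_mulVec, mul_nonsing_inv D ((isUnit_iff_isUnit_det D).mp hDu),
    one_mulVec, vecMulVec_mulVec, hx, MulOpposite.op_one, one_smul, sub_self]

namespace IsHermitian

variable {D : Matrix m m 𝕜} (hD : D.IsHermitian)
include hD

theorem star_inv_mulVec (x : m → 𝕜) : star (D⁻¹ *ᵥ x) = star x ᵥ* D⁻¹ := by
  rw [star_mulVec, hD.inv.eq]

theorem vecMulVec_star_mul_inv (x : m → 𝕜) :
    vecMulVec x (star x) * D⁻¹ = vecMulVec x (star (D⁻¹ *ᵥ x)) := by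
  rw [vecMulVec_mul, hD.star_inv_mulVec]

theorem orthProjCompl_inv_mulVec (x : m → 𝕜) :
    orthProjCompl (D⁻¹ *ᵥ x) = 1 - (star x ⬝ᵥ (D⁻¹ * D⁻¹) *ᵥ x)⁻¹ •
      (D⁻¹ * vecMulVec x (star x) * D⁻¹) := by
  rw [orthProjCompl, Matrix.mul_assoc, hD.vecMulVec_star_mul_inv, mul_vecMulVec, ← mulVec_mulVec,
    hD.star_inv_mulVec, ← dotProduct_mulVec]

theorem star_inv_mulVec_vecMul_sub_vecMulVec (hDu : IsUnit D) {x : m → 𝕜}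
    (hx : star x ⬝ᵥ D⁻¹ *ᵥ x = 1) : star (D⁻¹ *ᵥ x) ᵥ* (D - vecMulVec x (star x)) = 0 := by
  have hxy : star (D⁻¹ *ᵥ x) ⬝ᵥ x = 1 := by rw [star_dotProduct, hx, star_one]
  rw [vecMul_sub, vecMul_vecMulVec, hxy, one_smul, hD.star_inv_mulVec, vecMul_vecMul,
    nonsing_inv_mul D ((isUnit_iff_isUnit_det D).mp hDu), vecMul_one, sub_self]

end IsHermitian

end Matrix

theorem sherman_morrison_singular_general {n : ℕ} (D : Matrix (Fin n) (Fin n) ℂ)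
    (hD : IsUnit D) (hherm : D.IsHermitian)
    (x : Fin n → ℂ)
    (h1 : star x ⬝ᵥ D⁻¹.mulVec x = 1)
    (G : Matrix (Fin n) (Fin n) ℂ)
    (hG : G = 1 - (star x ⬝ᵥ (D⁻¹ * D⁻¹).mulVec x)⁻¹ •
      (D⁻¹ * vecMulVec x (star x) * D⁻¹)) :
    (G * G = G ∧ Gᴴ = G ∧
      LinearMap.range G.mulVecLin
        = LinearMap.range (D - vecMulVec x (star x)).mulVecLin) ∧
    IsMoorePenroseInv (D - vecMulVec x (star x)) (G * D⁻¹ * G) := by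
  have hdet : IsUnit D.det := (isUnit_iff_isUnit_det D).mp hD
  set y := D⁻¹ *ᵥ x
  have hy : y ≠ 0 := fun hy0 ↦ by simp [y, hy0] at h1
  rw [← hherm.orthProjCompl_inv_mulVec] at hG
  subst hG
  set A := D - vecMulVec x (star x)
  have hAG : A * orthProjCompl y = A :=
    mul_orthProjCompl_of_mulVec_eq_zero (sub_vecMulVec_mulVec_inv_mulVec hD h1)
  have hGA : orthProjCompl y * A = A :=
    orthProjCompl_mul_of_vecMul_eq_zero (hherm.star_inv_mulVec_vecMul_sub_vecMulVec hD h1)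
  have hAB : A * (orthProjCompl y * D⁻¹ * orthProjCompl y) = orthProjCompl y := by
    rw [← Matrix.mul_assoc, ← Matrix.mul_assoc, hAG, sub_mul, mul_nonsing_inv D hdet,
      hherm.vecMulVec_star_mul_inv, sub_mul, one_mul, vecMulVec_star_mul_orthProjCompl hy,
      sub_zero]
  have hBA : orthProjCompl y * D⁻¹ * orthProjCompl y * A = orthProjCompl y := by
    rw [Matrix.mul_assoc, hGA, Matrix.mul_assoc, mul_sub, nonsing_inv_mul D hdet, mul_vecMulVec,
      mul_sub, mul_one, orthProjCompl_mul_vecMulVec hy, sub_zero]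
  have hGG := orthProjCompl_mul_self hy
  refine ⟨⟨hGG, conjTranspose_orthProjCompl y, le_antisymm ?_ ?_⟩,
    isMoorePenroseInv_of_mul_eq hAB hBA (conjTranspose_orthProjCompl y) hGA
      (by rw [← Matrix.mul_assoc, ← Matrix.mul_assoc, hGG])⟩
  · exact hAB ▸ range_mulVecLin_mul_le _ _
  · exact hGA ▸ range_mulVecLin_mul_le _ _

/-- Rank-one update at the singular point `x* D⁻¹ x = 1`: the matrix
`G = I − (x* D⁻² x)⁻¹ D⁻¹ x x* D⁻¹` is the orthogonal projector onto the range of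
`D − x x*`, and the Moore–Penrose inverse of `D − x x*` is `G D⁻¹ G`. -/
theorem sherman_morrison_singular {n : ℕ} (D : Matrix (Fin n) (Fin n) ℂ)
    (hD : IsUnit D) (hherm : D.IsHermitian)
    (x : Fin n → ℂ) (hx : x ≠ 0)
    (h1 : star x ⬝ᵥ D⁻¹.mulVec x = 1)
    (G : Matrix (Fin n) (Fin n) ℂ)
    (hG : G = 1 - (star x ⬝ᵥ (D⁻¹ * D⁻¹).mulVec x)⁻¹ •
      (D⁻¹ * vecMulVec x (star x) * D⁻¹)) :
    (G * G = G ∧ Gᴴ = G ∧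
      LinearMap.range G.mulVecLin
        = LinearMap.range (D - vecMulVec x (star x)).mulVecLin) ∧
    IsMoorePenroseInv (D - vecMulVec x (star x)) (G * D⁻¹ * G) :=
  sherman_morrison_singular_general D hD hherm x h1 G hG
end

section
/- Let f₁,…,f_d be nonnegative integers with Σᵢ fᵢ = N and let Σ be the covariance matrix of the Dirichlet distribution with parameters αᵢ = fᵢ+1, i.e. Σ = [(N+d) Diag(f+1) − (f+1)(f+1)ᵀ] / ((N+d)²(N+d+1)). Let G = I − d⁻¹ 1 1ᵀ be the orthogonal projector onto the subspace of vectors with zero component sum. Then the Moore–Penrose inverse of Σ equals (N+d)(N+d+1) · G Diag(f+1)⁻¹ G. -/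
/-
Write `T = α₀ Diag α − α αᵀ` with `α = f + 1`, `α₀ = ∑ αᵢ = N + d`, so that `Σ = T / (α₀²(α₀+1))`.
The rows and columns of `T` sum to zero, so `T` is unchanged by the centering projector `G` on
either side, and `T Diag(α)⁻¹ = α₀ I − α 1ᵀ`. Since `1ᵀ G = 0`, this gives
`T (G Diag(α)⁻¹ G) = (G Diag(α)⁻¹ G) T = α₀ G`. Hence `Σ` times the proposed inverse is `G` on
either side, and the four Penrose conditions reduce to `G` being a symmetric idempotent fixing `Σ`.
-/

open Matrix

/-- `B` is the Moore–Penrose inverse of `A` (the four Penrose conditions, real case). -/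
def IsMoorePenroseInvR {n : ℕ} (A B : Matrix (Fin n) (Fin n) ℝ) : Prop :=
  A * B * A = A ∧ B * A * B = B ∧ (A * B)ᵀ = A * B ∧ (B * A)ᵀ = B * A

theorem IsMoorePenroseInvR.of_mul_eq {n : ℕ} {A B P : Matrix (Fin n) (Fin n) ℝ}
    (hAB : A * B = P) (hBA : B * A = P) (hP : Pᵀ = P) (hPA : P * A = A) (hPB : P * B = B) :
    IsMoorePenroseInvR A B :=
  ⟨by rw [hAB, hPA], by rw [hBA, hPB], by rw [hAB, hP], by rw [hBA, hP]⟩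

section Centering

variable (ι K : Type*) [Fintype ι] [DecidableEq ι] [Field K]

def centeringMatrix : Matrix ι ι K :=
  1 - (Fintype.card ι : K)⁻¹ • vecMulVec 1 1

variable {ι K}

@[simp]
theorem transpose_centeringMatrix : (centeringMatrix ι K)ᵀ = centeringMatrix ι K := by
  rw [centeringMatrix, transpose_sub, transpose_one, transpose_smul, transpose_vecMulVec]

theorem centeringMatrix_mulVec_one (h : (Fintype.card ι : K) ≠ 0) :
    centeringMatrix ι K *ᵥ 1 = 0 := by
  rw [centeringMatrix, sub_mulVec, one_mulVec, smul_mulVec, vecMulVec_mulVec,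
    one_dotProduct_one, op_smul_eq_smul, smul_smul, inv_mul_cancel₀ h, one_smul, sub_self]

theorem one_vecMul_centeringMatrix (h : (Fintype.card ι : K) ≠ 0) :
    1 ᵥ* centeringMatrix ι K = 0 := by
  rw [← transpose_centeringMatrix, vecMul_transpose, centeringMatrix_mulVec_one h]

theorem centeringMatrix_mul_of_one_vecMul_eq_zero {T : Matrix ι ι K} (hT : 1 ᵥ* T = 0) :
    centeringMatrix ι K * T = T := by
  rw [centeringMatrix, sub_mul, one_mul, Matrix.smul_mul, vecMulVec_mul, hT, vecMulVec_zero,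
    smul_zero, sub_zero]

theorem mul_centeringMatrix_of_mulVec_one_eq_zero {T : Matrix ι ι K} (hT : T *ᵥ 1 = 0) :
    T * centeringMatrix ι K = T := by
  rw [centeringMatrix, mul_sub, mul_one, Matrix.mul_smul, mul_vecMulVec, hT, zero_vecMulVec,
    smul_zero, sub_zero]

theorem centeringMatrix_mul_self (h : (Fintype.card ι : K) ≠ 0) :
    centeringMatrix ι K * centeringMatrix ι K = centeringMatrix ι K :=
  centeringMatrix_mul_of_one_vecMul_eq_zero (one_vecMul_centeringMatrix h)

end Centering

section DirichletScatter

variable {ι K : Type*} [Fintype ι] [DecidableEq ι] [Field K]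

/-- `α₀ Diag α − α αᵀ` with `α₀ = ∑ αᵢ`: the covariance matrix of `Dirichlet(α)` times
`α₀²(α₀+1)`. -/
def dirichletScatter (α : ι → K) : Matrix ι ι K :=
  (∑ i, α i) • diagonal α - vecMulVec α α

@[simp]
theorem transpose_dirichletScatter (α : ι → K) : (dirichletScatter α)ᵀ = dirichletScatter α := by
  simp [dirichletScatter]

theorem dirichletScatter_mulVec_one (α : ι → K) : dirichletScatter α *ᵥ 1 = 0 := by
  rw [dirichletScatter, sub_mulVec, smul_mulVec, vecMulVec_mulVec, dotProduct_one]
  ext i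
  simp [mulVec_diagonal, mul_comm]

theorem one_vecMul_dirichletScatter (α : ι → K) : 1 ᵥ* dirichletScatter α = 0 := by
  rw [← transpose_dirichletScatter, vecMul_transpose, dirichletScatter_mulVec_one]

theorem dirichletScatter_mul_diagonal_inv {α : ι → K} (hα : ∀ i, α i ≠ 0) :
    dirichletScatter α * diagonal α⁻¹ = (∑ i, α i) • 1 - vecMulVec α 1 := by
  have hdiag : diagonal α * diagonal α⁻¹ = 1 := by
    simp [diagonal_mul_diagonal, hα]
  have hvec : α ᵥ* diagonal α⁻¹ = 1 := funext fun i => by simp [vecMul_diagonal, hα]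
  rw [dirichletScatter, sub_mul, Matrix.smul_mul, hdiag, vecMulVec_mul, hvec]

theorem dirichletScatter_mul_centered_diagonal_inv {α : ι → K}
    (h : (Fintype.card ι : K) ≠ 0) (hα : ∀ i, α i ≠ 0) :
    dirichletScatter α * (centeringMatrix ι K * diagonal α⁻¹ * centeringMatrix ι K) =
      (∑ i, α i) • centeringMatrix ι K := by
  rw [← Matrix.mul_assoc, ← Matrix.mul_assoc,
    mul_centeringMatrix_of_mulVec_one_eq_zero (dirichletScatter_mulVec_one α),
    dirichletScatter_mul_diagonal_inv hα, sub_mul, Matrix.smul_mul, one_mul, vecMulVec_mul,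
    one_vecMul_centeringMatrix h, vecMulVec_zero, sub_zero]

theorem centered_diagonal_inv_mul_dirichletScatter {α : ι → K}
    (h : (Fintype.card ι : K) ≠ 0) (hα : ∀ i, α i ≠ 0) :
    centeringMatrix ι K * diagonal α⁻¹ * centeringMatrix ι K * dirichletScatter α =
      (∑ i, α i) • centeringMatrix ι K := by
  rw [← transpose_inj, transpose_mul, transpose_dirichletScatter, transpose_mul, transpose_mul,
    diagonal_transpose, transpose_centeringMatrix, transpose_smul, transpose_centeringMatrix,
    ← dirichletScatter_mul_centered_diagonal_inv h hα]
  simp only [Matrix.mul_assoc]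

end DirichletScatter

theorem isMoorePenroseInvR_smul_dirichletScatter {n : ℕ} {α : Fin n → ℝ} (hn : n ≠ 0)
    (hα : ∀ i, α i ≠ 0) {a b : ℝ} (hab : a * b * ∑ i, α i = 1) :
    IsMoorePenroseInvR (a • dirichletScatter α)
      (b • (centeringMatrix (Fin n) ℝ * diagonal α⁻¹ * centeringMatrix (Fin n) ℝ)) := by
  have hcard : (Fintype.card (Fin n) : ℝ) ≠ 0 := by simpa using hn
  apply IsMoorePenroseInvR.of_mul_eq (P := centeringMatrix (Fin n) ℝ)
  · rw [smul_mul_smul_comm, dirichletScatter_mul_centered_diagonal_inv hcard hα, smul_smul, hab,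
      one_smul]
  · rw [smul_mul_smul_comm, centered_diagonal_inv_mul_dirichletScatter hcard hα, smul_smul,
      mul_comm b, hab, one_smul]
  · exact transpose_centeringMatrix
  · rw [Matrix.mul_smul, centeringMatrix_mul_of_one_vecMul_eq_zero (one_vecMul_dirichletScatter α)]
  · rw [Matrix.mul_smul, ← Matrix.mul_assoc, ← Matrix.mul_assoc, centeringMatrix_mul_self hcard]

/-- The Moore–Penrose inverse of the Dirichlet covariance matrix equals
`(N+d)(N+d+1) G Diag(f+1)⁻¹ G` where `G = I − d⁻¹ 1 1ᵀ`. -/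
theorem dirichlet_cov_mp_inverse {d N : ℕ} (f : Fin d → ℕ) (hf : ∑ i, f i = N)
    (S G : Matrix (Fin d) (Fin d) ℝ)
    (hS : S = (((N : ℝ) + d) ^ 2 * ((N : ℝ) + d + 1))⁻¹ •
      (((N : ℝ) + d) • Matrix.diagonal (fun i => (f i : ℝ) + 1)
        - vecMulVec (fun i => (f i : ℝ) + 1) (fun i => (f i : ℝ) + 1)))
    (hG : G = 1 - (d : ℝ)⁻¹ • vecMulVec (fun _ => 1) (fun _ => 1)) :
    IsMoorePenroseInvR S
      ((((N : ℝ) + d) * ((N : ℝ) + d + 1)) •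
        (G * Matrix.diagonal (fun i => ((f i : ℝ) + 1)⁻¹) * G)) := by
  rcases Nat.eq_zero_or_pos d with rfl | hd
  · exact ⟨Subsingleton.elim _ _, Subsingleton.elim _ _, Subsingleton.elim _ _,
      Subsingleton.elim _ _⟩
  have hsum : ∑ i, ((f i : ℝ) + 1) = N + d := by
    simp [Finset.sum_add_distrib, ← hf]
  have hS' : S = (((N : ℝ) + d) ^ 2 * ((N : ℝ) + d + 1))⁻¹ •
      dirichletScatter (fun i => (f i : ℝ) + 1) := by
    rw [hS, dirichletScatter, hsum]
  have hG' : G = centeringMatrix (Fin d) ℝ := by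
    rw [hG, centeringMatrix, Fintype.card_fin]
    rfl
  subst hS' hG'
  refine isMoorePenroseInvR_smul_dirichletScatter hd.ne' (fun i => by positivity) ?_
  rw [hsum]
  field_simp
end

section
/- Let X be an n-dimensional Gaussian random vector with mean μ and positive-semidefinite covariance Σ of rank ν, such that X − μ lies almost surely in the range of Σ. Then the squared Mahalanobis distance M² = (X−μ)* Σ† (X−μ) has a chi-squared distribution with ν degrees of freedom. -/
/-!
Writing `X - μ = A z` with `z` standard Gaussian, the Mahalanobis form becomes `zᵀ Q z` with
`Q = Aᵀ Σ† A`. The Moore–Penrose identities make `Σ†` symmetric and `Q` an orthogonal projection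
of rank `rank Σ`. In an orthonormal eigenbasis of `Q` the coordinates of `z` are again i.i.d.
standard Gaussians (rotation invariance), and `zᵀ Q z` is the sum of the squares of the `rank Σ`
coordinates with eigenvalue `1`.
-/

open Matrix MeasureTheory ProbabilityTheory WithLp

section MoorePenrose

variable {R : Type*} [Semigroup R] [StarMul R] {a b c : R}

def IsMoorePenroseInverse (a b : R) : Prop :=
  a * b * a = a ∧ b * a * b = b ∧ IsSelfAdjoint (a * b) ∧ IsSelfAdjoint (b * a)

lemma IsMoorePenroseInverse.star_star (h : IsMoorePenroseInverse a b) :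
    IsMoorePenroseInverse (star a) (star b) := by
  obtain ⟨h₁, h₂, h₃, h₄⟩ := h
  refine ⟨?_, ?_, ?_, ?_⟩
  · simpa only [star_mul, mul_assoc] using congrArg star h₁
  · simpa only [star_mul, mul_assoc] using congrArg star h₂
  · simpa only [star_mul] using IsSelfAdjoint.star_iff.mpr h₄
  · simpa only [star_mul] using IsSelfAdjoint.star_iff.mpr h₃

lemma IsMoorePenroseInverse.eq (hb : IsMoorePenroseInverse a b)
    (hc : IsMoorePenroseInverse a c) : b = c := by
  obtain ⟨hb₁, hb₂, hb₃, hb₄⟩ := hb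
  obtain ⟨hc₁, hc₂, hc₃, hc₄⟩ := hc
  have hb' : b = b * a * c := calc
    b = b * a * b := hb₂.symm
    _ = b * star (a * b) := by rw [hb₃.star_eq, mul_assoc]
    _ = b * star (a * c * a * b) := by rw [hc₁]
    _ = b * star (a * b) * star (a * c) := by simp only [star_mul, mul_assoc]
    _ = b * a * b * a * c := by rw [hb₃.star_eq, hc₃.star_eq]; simp only [mul_assoc]
    _ = b * a * c := by rw [hb₂]
  have hc' : c = b * a * c := calc
    c = c * a * c := hc₂.symm
    _ = star (c * a) * c := by rw [hc₄.star_eq]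
    _ = star (c * (a * b * a)) * c := by rw [hb₁]
    _ = star (b * a) * star (c * a) * c := by simp only [star_mul, mul_assoc]
    _ = b * a * (c * a * c) := by rw [hb₄.star_eq, hc₄.star_eq]; simp only [mul_assoc]
    _ = b * a * c := by rw [hc₂]
  exact hb'.trans hc'.symm

lemma IsMoorePenroseInverse.isSelfAdjoint (h : IsMoorePenroseInverse a b)
    (ha : IsSelfAdjoint a) : IsSelfAdjoint b :=
  (h.eq (ha.star_eq ▸ h.star_star)).symm

end MoorePenrose

namespace Matrix

variable {m n R : Type*}

lemma isSelfAdjoint_iff_transpose_eq [Star R] [TrivialStar R] {M : Matrix n n R} :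
    IsSelfAdjoint M ↔ Mᵀ = M := by
  rw [IsSelfAdjoint, star_eq_conjTranspose, conjTranspose_eq_transpose_of_trivial]

variable [Fintype m] [Fintype n]

lemma isIdempotentElem_transpose_mul_mul [CommSemiring R] {A : Matrix m n R}
    {B : Matrix m m R} (h : B * (A * Aᵀ) * B = B) : IsIdempotentElem (Aᵀ * B * A) := calc
  Aᵀ * B * A * (Aᵀ * B * A) = Aᵀ * (B * (A * Aᵀ) * B) * A := by simp only [Matrix.mul_assoc]
  _ = Aᵀ * B * A := by rw [h, Matrix.mul_assoc]

lemma rank_transpose_mul_mul [Field R] [LinearOrder R] [IsStrictOrderedRing R]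
    {A : Matrix m n R} {B : Matrix m m R} (h : A * Aᵀ * B * (A * Aᵀ) = A * Aᵀ) :
    (Aᵀ * B * A).rank = (A * Aᵀ).rank := by
  refine le_antisymm ?_ ?_
  · calc (Aᵀ * B * A).rank ≤ A.rank := rank_mul_le_right _ _
      _ = (A * Aᵀ).rank := (rank_self_mul_transpose A).symm
  · calc (A * Aᵀ).rank = (A * (Aᵀ * B * A) * Aᵀ).rank := by
          conv_lhs => rw [← h]
          simp only [Matrix.mul_assoc]
      _ ≤ (A * (Aᵀ * B * A)).rank := rank_mul_le_left _ _
      _ ≤ (Aᵀ * B * A).rank := rank_mul_le_right _ _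

namespace IsHermitian

variable [DecidableEq n] {Q : Matrix n n ℝ}

lemma eigenvalues_eq_zero_or_one (hQ : Q.IsHermitian) (hQQ : IsIdempotentElem Q) (i : n) :
    hQ.eigenvalues i = 0 ∨ hQ.eigenvalues i = 1 :=
  hQQ.spectrum_subset ℝ (hQ.spectrum_real_eq_range_eigenvalues ▸ Set.mem_range_self i)

lemma dotProduct_mulVec_sum_eigenvectorBasis (hQ : Q.IsHermitian) (x : n → ℝ) :
    ofLp (∑ i, x i • hQ.eigenvectorBasis i) ⬝ᵥ Q *ᵥ ofLp (∑ i, x i • hQ.eigenvectorBasis i) =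
      ∑ i, hQ.eigenvalues i * x i ^ 2 := by
  have horth (i j : n) :
      ofLp (hQ.eigenvectorBasis j) ⬝ᵥ ofLp (hQ.eigenvectorBasis i) = if i = j then 1 else 0 := by
    rw [← orthonormal_iff_ite.mp hQ.eigenvectorBasis.orthonormal i j,
      EuclideanSpace.inner_eq_star_dotProduct, star_trivial]
  simp only [ofLp_sum, ofLp_smul, mulVec_sum, mulVec_smul, hQ.mulVec_eigenvectorBasis,
    sum_dotProduct, dotProduct_sum, smul_dotProduct, dotProduct_smul, horth, smul_eq_mul,
    mul_ite, mul_one, mul_zero, Finset.sum_ite_eq, Finset.mem_univ, if_true]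
  exact Finset.sum_congr rfl fun i _ => by ring

end IsHermitian

end Matrix

/-- The chi-squared distribution with `Fintype.card ι` degrees of freedom. -/
noncomputable def chiSquared (ι : Type*) [Fintype ι] : Measure ℝ :=
  (Measure.pi fun _ : ι => gaussianReal 0 1).map fun w => ∑ i, w i ^ 2

section StdGaussian

variable {ι κ : Type*} [Fintype ι] [Fintype κ]

lemma chiSquared_congr (e : ι ≃ κ) : chiSquared ι = chiSquared κ := by
  rw [chiSquared, chiSquared,
    ← (measurePreserving_piCongrLeft (fun _ => gaussianReal 0 1) e).map_eq,
    Measure.map_map (by fun_prop) (by fun_prop)]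
  congr 1
  funext w
  simp only [Function.comp_apply, MeasurableEquiv.coe_piCongrLeft]
  rw [← e.sum_comp]
  simp [Equiv.piCongrLeft_apply_apply]

lemma map_sum_sq_subtype_pi_gaussianReal (p : ι → Prop) [DecidablePred p] :
    (Measure.pi fun _ : ι => gaussianReal 0 1).map (fun x => ∑ i : {i // p i}, x i ^ 2) =
      chiSquared {i // p i} := by
  have hsplit :=
    (measurePreserving_piEquivPiSubtypeProd (fun _ : ι => gaussianReal 0 1) p).map_eq
  rw [chiSquared, ← Measure.fst_prod (μ := Measure.pi fun _ : {i // p i} => gaussianReal 0 1)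
    (ν := Measure.pi fun _ : {i // ¬ p i} => gaussianReal 0 1), ← hsplit, Measure.fst,
    Measure.map_map measurable_fst (by fun_prop), Measure.map_map (by fun_prop) (by fun_prop)]
  rfl

lemma pi_gaussianReal_eq_map_orthonormalBasis
    (b : OrthonormalBasis ι ℝ (EuclideanSpace ℝ ι)) :
    Measure.pi (fun _ : ι => gaussianReal 0 1) =
      (Measure.pi fun _ : ι => gaussianReal 0 1).map fun x => ofLp (∑ i, x i • b i) := by
  have h := congrArg (Measure.map ofLp) (map_pi_eq_stdGaussian (ι := ι))
  rw [stdGaussian_eq_map_pi_orthonormalBasis b, Measure.map_map (by fun_prop) (by fun_prop),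
    Measure.map_map (by fun_prop) (by fun_prop)] at h
  simpa only [Function.comp_def, ofLp_toLp, Measure.map_id'] using h

lemma map_dotProduct_mulVec_pi_gaussianReal_of_isIdempotentElem [DecidableEq ι]
    {Q : Matrix ι ι ℝ} (hQ : Q.IsHermitian) (hQQ : IsIdempotentElem Q) :
    (Measure.pi fun _ : ι => gaussianReal 0 1).map (fun z => z ⬝ᵥ Q *ᵥ z) =
      chiSquared (Fin Q.rank) := by
  have hquad (x : ι → ℝ) : ofLp (∑ i, x i • hQ.eigenvectorBasis i) ⬝ᵥ
      Q *ᵥ ofLp (∑ i, x i • hQ.eigenvectorBasis i) =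
        ∑ i : {i // hQ.eigenvalues i ≠ 0}, x i ^ 2 := by
    rw [hQ.dotProduct_mulVec_sum_eigenvectorBasis,
      ← Finset.sum_subtype {i | hQ.eigenvalues i ≠ 0} (by simp) (fun i => x i ^ 2),
      Finset.sum_filter]
    refine Finset.sum_congr rfl fun i _ => ?_
    rcases hQ.eigenvalues_eq_zero_or_one hQQ i with h | h <;> simp [h]
  conv_lhs => rw [pi_gaussianReal_eq_map_orthonormalBasis hQ.eigenvectorBasis,
    Measure.map_map (by fun_prop) (by fun_prop)]
  simp only [Function.comp_def, hquad]
  rw [map_sum_sq_subtype_pi_gaussianReal,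
    chiSquared_congr (Fintype.equivFinOfCardEq hQ.rank_eq_card_non_zero_eigs.symm)]

end StdGaussian

theorem mahalanobis_chi_squared_general {Ω : Type*} [MeasurableSpace Ω]
    (P : Measure Ω)
    {n ν : ℕ} (μv : Fin n → ℝ) (S Sd A : Matrix (Fin n) (Fin n) ℝ)
    (hrank : S.rank = ν) (hA : A * Aᵀ = S)
    (hMP : S * Sd * S = S ∧ Sd * S * Sd = Sd ∧ (S * Sd)ᵀ = S * Sd ∧ (Sd * S)ᵀ = Sd * S)
    (X : Ω → Fin n → ℝ) (hXm : Measurable X)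
    (hgauss : Measure.map X P =
      Measure.map (fun z => μv + A.mulVec z)
        (Measure.pi fun _ : Fin n => gaussianReal 0 1)) :
    Measure.map (fun ω => (X ω - μv) ⬝ᵥ Sd.mulVec (X ω - μv)) P =
      Measure.map (fun w : Fin ν → ℝ => ∑ i, (w i) ^ 2)
        (Measure.pi fun _ : Fin ν => gaussianReal 0 1) := by
  subst hA
  obtain ⟨hMP₁, hMP₂, hMP₃, hMP₄⟩ := hMP
  have hSd : Sd.IsHermitian := isHermitian_iff_isSelfAdjoint.mpr <|
    IsMoorePenroseInverse.isSelfAdjoint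
      ⟨hMP₁, hMP₂, isSelfAdjoint_iff_transpose_eq.mpr hMP₃,
        isSelfAdjoint_iff_transpose_eq.mpr hMP₄⟩
      (isSelfAdjoint_iff_transpose_eq.mpr (by rw [transpose_mul, transpose_transpose]))
  have hQ : (Aᵀ * Sd * A).IsHermitian := by
    simpa only [conjTranspose_eq_transpose_of_trivial] using
      isHermitian_conjTranspose_mul_mul A hSd
  have hquad (z : Fin n → ℝ) :
      (μv + A *ᵥ z - μv) ⬝ᵥ Sd *ᵥ (μv + A *ᵥ z - μv) = z ⬝ᵥ (Aᵀ * Sd * A) *ᵥ z := by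
    rw [add_sub_cancel_left, ← mulVec_mulVec, ← mulVec_mulVec, dotProduct_mulVec z,
      vecMul_transpose]
  calc P.map (fun ω => (X ω - μv) ⬝ᵥ Sd *ᵥ (X ω - μv))
      = (P.map X).map (fun y => (y - μv) ⬝ᵥ Sd *ᵥ (y - μv)) := by
        rw [Measure.map_map (by fun_prop) hXm]; rfl
    _ = (Measure.pi fun _ : Fin n => gaussianReal 0 1).map
          (fun z => z ⬝ᵥ (Aᵀ * Sd * A) *ᵥ z) := by
        rw [hgauss, Measure.map_map (by fun_prop) (by fun_prop)]
        simp only [Function.comp_def, hquad]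
    _ = chiSquared (Fin (Aᵀ * Sd * A).rank) :=
        map_dotProduct_mulVec_pi_gaussianReal_of_isIdempotentElem hQ
          (isIdempotentElem_transpose_mul_mul hMP₂)
    _ = _ := by rw [rank_transpose_mul_mul hMP₁, hrank]; rfl

/-- For a Gaussian vector `X` with mean `μ` and covariance `Σ = A Aᵀ` of rank `ν`, with
`X − μ` a.s. in the range of `Σ`, the squared Mahalanobis distance
`(X−μ)* Σ† (X−μ)` is chi-squared distributed with `ν` degrees of freedom,
i.e. distributed as the sum of squares of `ν` i.i.d. standard normals. -/
theorem mahalanobis_chi_squared {Ω : Type*} [MeasurableSpace Ω]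
    (P : Measure Ω) [IsProbabilityMeasure P]
    {n ν : ℕ} (μv : Fin n → ℝ) (S Sd A : Matrix (Fin n) (Fin n) ℝ)
    (hS : S.PosSemidef) (hrank : S.rank = ν) (hA : A * Aᵀ = S)
    (hMP : S * Sd * S = S ∧ Sd * S * Sd = Sd ∧ (S * Sd)ᵀ = S * Sd ∧ (Sd * S)ᵀ = Sd * S)
    (X : Ω → Fin n → ℝ) (hXm : Measurable X)
    (hgauss : Measure.map X P =
      Measure.map (fun z => μv + A.mulVec z)
        (Measure.pi fun _ : Fin n => gaussianReal 0 1))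
    (hsupp : ∀ᵐ ω ∂P, X ω - μv ∈ LinearMap.range S.mulVecLin) :
    Measure.map (fun ω => (X ω - μv) ⬝ᵥ Sd.mulVec (X ω - μv)) P =
      Measure.map (fun w : Fin ν → ℝ => ∑ i, (w i) ^ 2)
        (Measure.pi fun _ : Fin ν => gaussianReal 0 1) :=
  mahalanobis_chi_squared_general P μv S Sd A hrank hA hMP X hXm hgauss
end

section
/- For d ≥ 1, a ≥ 0 and 0 ≤ r ≤ R, define g(r, a) = ∫₀^r x^{d−1} e^{−(x+a)²/2} dx. Then g(r, a)/g(R, a) ≥ g(r, 0)/g(R, 0). -/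
/-!
Since `e^{-(x+a)²/2} = e^{-x²/2} · e^{-ax-a²/2}`, the integrand for `a` is the integrand for `0`
reweighted by a weight that is non-increasing in `x` when `a ≥ 0`. Reweighting a nonnegative density
by a non-increasing weight `w` can only move mass towards the initial segment `[0, r]`: on `[0, r]`
the weight is at least `w r`, on `[r, R]` at most `w r`, and comparing both pieces with `w r`
gives the cross-multiplied ratio inequality (a form of Chebyshev's integral inequality).
-/

open MeasureTheory Set

theorem intervalIntegral.integral_mul_integral_mul_le_of_antitoneOn {f w : ℝ → ℝ} {p r R : ℝ}
    (hpr : p ≤ r) (hrR : r ≤ R) (hf : ∀ x ∈ Icc p R, 0 ≤ f x) (hw : AntitoneOn w (Icc p R))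
    (hfi : IntervalIntegrable f volume p R)
    (hfwi : IntervalIntegrable (fun x => f x * w x) volume p R) :
    (∫ x in p..r, f x) * ∫ x in p..R, f x * w x ≤ (∫ x in p..r, f x * w x) * ∫ x in p..R, f x := by
  have hr : r ∈ Icc p R := ⟨hpr, hrR⟩
  have hsub₁ : uIcc p r ⊆ uIcc p R := uIcc_subset_uIcc_left (Icc_subset_uIcc hr)
  have hsub₂ : uIcc r R ⊆ uIcc p R := uIcc_subset_uIcc_right (Icc_subset_uIcc hr)
  have hlow : w r * ∫ x in p..r, f x ≤ ∫ x in p..r, f x * w x := by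
    rw [← intervalIntegral.integral_const_mul]
    refine intervalIntegral.integral_mono_on hpr ((hfi.mono_set hsub₁).const_mul _)
      (hfwi.mono_set hsub₁) fun x hx => ?_
    have hxI : x ∈ Icc p R := ⟨hx.1, hx.2.trans hrR⟩
    rw [mul_comm]
    exact mul_le_mul_of_nonneg_left (hw hxI hr hx.2) (hf x hxI)
  have hhigh : ∫ x in r..R, f x * w x ≤ w r * ∫ x in r..R, f x := by
    rw [← intervalIntegral.integral_const_mul]
    refine intervalIntegral.integral_mono_on hrR (hfwi.mono_set hsub₂)
      ((hfi.mono_set hsub₂).const_mul _) fun x hx => ?_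
    have hxI : x ∈ Icc p R := ⟨hpr.trans hx.1, hx.2⟩
    rw [mul_comm (w r)]
    exact mul_le_mul_of_nonneg_left (hw hr hxI hx.1) (hf x hxI)
  have hlow_nonneg : 0 ≤ ∫ x in p..r, f x :=
    intervalIntegral.integral_nonneg hpr fun x hx => hf x ⟨hx.1, hx.2.trans hrR⟩
  have hhigh_nonneg : 0 ≤ ∫ x in r..R, f x :=
    intervalIntegral.integral_nonneg hrR fun x hx => hf x ⟨hpr.trans hx.1, hx.2⟩
  rw [← intervalIntegral.integral_add_adjacent_intervals (hfi.mono_set hsub₁) (hfi.mono_set hsub₂),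
    ← intervalIntegral.integral_add_adjacent_intervals (hfwi.mono_set hsub₁)
      (hfwi.mono_set hsub₂)]
  nlinarith [mul_le_mul_of_nonneg_left hhigh hlow_nonneg,
    mul_le_mul_of_nonneg_right hlow hhigh_nonneg]

theorem Real.exp_neg_add_sq_div_two (x a : ℝ) :
    Real.exp (-(x + a) ^ 2 / 2) = Real.exp (-x ^ 2 / 2) * Real.exp (-(a * x) - a ^ 2 / 2) := by
  rw [← Real.exp_add]
  ring_nf

theorem intervalIntegral.integral_pow_mul_exp_neg_add_sq_pos (n : ℕ) (a : ℝ) {R : ℝ}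
    (hR : 0 < R) : 0 < ∫ x in (0 : ℝ)..R, x ^ n * Real.exp (-(x + a) ^ 2 / 2) :=
  intervalIntegral.intervalIntegral_pos_of_pos_on
    ((by fun_prop : Continuous _).intervalIntegrable _ _)
    (fun x hx => mul_pos (pow_pos hx.1 _) (Real.exp_pos _)) hR

theorem truncated_ratio_inequality_general {d : ℕ} (a : ℝ) (ha : 0 ≤ a)
    (r R : ℝ) (hr : 0 ≤ r) (hrR : r ≤ R) :
    let g : ℝ → ℝ → ℝ := fun r a =>
      ∫ x in (0 : ℝ)..r, x ^ (d - 1) * Real.exp (-(x + a) ^ 2 / 2)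
    g r a / g R a ≥ g r 0 / g R 0 := by
  intro g
  rcases (hr.trans hrR).eq_or_lt with hR | hR
  · obtain rfl : r = 0 := le_antisymm (hrR.trans_eq hR.symm) hr
    simp [g]
  have hweight : AntitoneOn (fun x => Real.exp (-(a * x) - a ^ 2 / 2)) (Icc 0 R) :=
    fun x _ y _ hxy => Real.exp_le_exp.2 (by nlinarith)
  have key := intervalIntegral.integral_mul_integral_mul_le_of_antitoneOn hr hrR
    (fun x hx => mul_nonneg (pow_nonneg hx.1 (d - 1)) (Real.exp_nonneg (-(x + 0) ^ 2 / 2)))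
    hweight ((by fun_prop : Continuous _).intervalIntegrable _ _)
    ((by fun_prop : Continuous _).intervalIntegrable _ _)
  simp only [add_zero, mul_assoc, ← Real.exp_neg_add_sq_div_two] at key
  rw [ge_iff_le, div_le_div_iff₀ (intervalIntegral.integral_pow_mul_exp_neg_add_sq_pos _ _ hR)
    (intervalIntegral.integral_pow_mul_exp_neg_add_sq_pos _ _ hR)]
  simpa only [g, add_zero] using key

/-- With `g(r,a) = ∫₀^r x^{d−1} e^{−(x+a)²/2} dx`, for `a ≥ 0` and `0 ≤ r ≤ R`,
`g(r,a)/g(R,a) ≥ g(r,0)/g(R,0)`. -/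
theorem truncated_ratio_inequality {d : ℕ} (hd : 1 ≤ d) (a : ℝ) (ha : 0 ≤ a)
    (r R : ℝ) (hr : 0 ≤ r) (hrR : r ≤ R) :
    let g : ℝ → ℝ → ℝ := fun r a =>
      ∫ x in (0 : ℝ)..r, x ^ (d - 1) * Real.exp (-(x + a) ^ 2 / 2)
    g r a / g R a ≥ g r 0 / g R 0 :=
  truncated_ratio_inequality_general a ha r R hr hrR
end

section
/- Let f₁,…,f_d be nonnegative integers with Σᵢ fᵢ = N, N ≥ 1. Let x = f/N (the mode-derived relative frequency vector), μ = (f+1)/(N+d) (the Dirichlet mean), and Σ† the Moore–Penrose inverse of the Dirichlet covariance matrix, so that M² = (x−μ)* Σ† (x−μ) = ((N+d+1)/N²)·[(N+d) Σᵢ (fᵢ+1)⁻¹ − d²]. Then M² ≤ (N+d+1)(d−1)/(N+1). -/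
/-!
Write `aᵢ = fᵢ + 1 ∈ [1, N + 1]`. On that interval the convex function `a ↦ a⁻¹` lies below its
chord `a ↦ 1 - (a - 1)/(N + 1)`, so `∑ aᵢ⁻¹ ≤ d - N/(N + 1)`. Substituting this into
`(N + d) ∑ aᵢ⁻¹ - d²` leaves exactly `N² (d - 1)/(N + 1)`.
-/

open Finset

lemma inv_add_one_le_one_sub_div {x M : ℝ} (hx : 0 ≤ x) (hxM : x ≤ M) :
    (x + 1)⁻¹ ≤ 1 - x / (M + 1) := by
  have hM : 0 < M + 1 := by linarith
  rw [one_sub_div hM.ne', ← one_div, div_le_div_iff₀ (by linarith) hM]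
  nlinarith

lemma sum_inv_add_one_le {ι : Type*} [Fintype ι] (x : ι → ℝ) (hx : ∀ i, 0 ≤ x i) :
    ∑ i, (x i + 1)⁻¹ ≤ Fintype.card ι - (∑ i, x i) / (∑ i, x i + 1) := by
  have hle : ∀ i, x i ≤ ∑ j, x j := fun i =>
    single_le_sum (fun j _ => hx j) (mem_univ i)
  calc ∑ i, (x i + 1)⁻¹ ≤ ∑ i, (1 - x i / (∑ j, x j + 1)) :=
        sum_le_sum fun i _ => inv_add_one_le_one_sub_div (hx i) (hle i)
    _ = Fintype.card ι - (∑ i, x i) / (∑ i, x i + 1) := by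
        rw [sum_sub_distrib, ← sum_div]
        simp

/-- The squared Mahalanobis distance between the multinomial mode `f/N` and the
Dirichlet mean `(f+1)/(N+d)` is bounded by `(N+d+1)(d−1)/(N+1)`. -/
theorem mode_in_confidence_region {d N : ℕ} (hN : 1 ≤ N) (f : Fin d → ℕ)
    (hf : ∑ i, f i = N) :
    ((N : ℝ) + d + 1) / (N : ℝ) ^ 2 *
        (((N : ℝ) + d) * (∑ i, ((f i : ℝ) + 1)⁻¹) - (d : ℝ) ^ 2)
      ≤ ((N : ℝ) + d + 1) * ((d : ℝ) - 1) / ((N : ℝ) + 1) := by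
  have hN' : (0 : ℝ) < N := by exact_mod_cast hN
  have hsum : ∑ i, ((f i : ℝ) + 1)⁻¹ ≤ d - N / (N + 1) := by
    have := sum_inv_add_one_le (fun i => (f i : ℝ)) fun i => (f i).cast_nonneg
    rwa [← Nat.cast_sum, hf, Fintype.card_fin] at this
  have hquad : ((N : ℝ) + d) * (∑ i, ((f i : ℝ) + 1)⁻¹) - (d : ℝ) ^ 2
      ≤ (N : ℝ) ^ 2 * ((d : ℝ) - 1) / ((N : ℝ) + 1) :=
    calc ((N : ℝ) + d) * (∑ i, ((f i : ℝ) + 1)⁻¹) - (d : ℝ) ^ 2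
        ≤ ((N : ℝ) + d) * (d - N / (N + 1)) - (d : ℝ) ^ 2 := by gcongr
      _ = (N : ℝ) ^ 2 * ((d : ℝ) - 1) / ((N : ℝ) + 1) := by field_simp; ring
  calc ((N : ℝ) + d + 1) / (N : ℝ) ^ 2 *
        (((N : ℝ) + d) * (∑ i, ((f i : ℝ) + 1)⁻¹) - (d : ℝ) ^ 2)
      ≤ ((N : ℝ) + d + 1) / (N : ℝ) ^ 2 * ((N : ℝ) ^ 2 * ((d : ℝ) - 1) / ((N : ℝ) + 1)) := by
        gcongr
    _ = ((N : ℝ) + d + 1) * ((d : ℝ) - 1) / ((N : ℝ) + 1) := by field_simp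
end
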